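/- If X is a dcpo, C a Scott-closed subset of X, W = { δ_x | x ∈ C } the set of Dirac valuations of points of C, and W̄ the Scott closure of W inside the dcpo of subprobability valuations on X (stochastic order), then for any y ∈ X: δ_y ∈ W̄ if and only if y ∈ C. -/

import Mathlib

/-- A set is Scott-open if it is an upper set inaccessible by suprema of
directed sets. -/
def ScottOpen {α : Type*} [Preorder α] (U : Set α) : Prop :=
  (∀ ⦃a b : α⦄, a ≤ b → a ∈ U → b ∈ U) ∧
  ∀ d : Set α, d.Nonempty → DirectedOn (· ≤ ·) d → ∀ x : α, IsLUB d x → x ∈ U →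
    (d ∩ U).Nonempty

/-- A preorder is a dcpo when every nonempty directed subset has a least upper
bound. -/
def IsDcpo (α : Type*) [Preorder α] : Prop :=
  ∀ d : Set α, d.Nonempty → DirectedOn (· ≤ ·) d → ∃ x : α, IsLUB d x

/-- A subprobability valuation on a dcpo (with its Scott topology): a
`[0,1]`-valued, strict, monotone, Scott-continuous, modular function on
Scott-open sets. -/
structure SVal (α : Type*) [Preorder α] where
  v : Set α → ℝ
  nonneg : ∀ U : Set α, ScottOpen U → 0 ≤ v U
  le_one : ∀ U : Set α, ScottOpen U → v U ≤ 1
  strict : v ∅ = 0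
  mono : ∀ ⦃U V : Set α⦄, ScottOpen U → ScottOpen V → U ⊆ V → v U ≤ v V
  cont : ∀ D : Set (Set α), (∀ U ∈ D, ScottOpen U) → D.Nonempty →
    DirectedOn (· ⊆ ·) D → v (⋃₀ D) = sSup (v '' D)
  modular : ∀ U V : Set α, ScottOpen U → ScottOpen V →
    v U + v V = v (U ∪ V) + v (U ∩ V)

/-- The stochastic order on subprobability valuations. -/
instance SVal.instPreorder {α : Type*} [Preorder α] : Preorder (SVal α) where
  le ν₁ ν₂ := ∀ U : Set α, ScottOpen U → ν₁.v U ≤ ν₂.v U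
  le_refl ν := fun _ _ => le_refl _
  le_trans ν₁ ν₂ ν₃ h₁ h₂ := fun U hU => le_trans (h₁ U hU) (h₂ U hU)

/-- The Choquet integral of `f` against the set-function `νv`:
`∫₀¹ νv (f⁻¹(t,∞)) dt`. -/
noncomputable def choquet {α : Type*} (νv : Set α → ℝ) (f : α → ℝ) : ℝ :=
  ∫ t in (0:ℝ)..1, νv (f ⁻¹' Set.Ioi t)

open Classical in
/-- The Dirac valuation of a point, as a set-function. -/
noncomputable def diracF {α : Type*} (x : α) : Set α → ℝ :=
  fun U => if x ∈ U then 1 else 0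

/-!
For a Scott-open `U ⊆ X`, the valuations giving `U` positive mass form a Scott-open set: directed
suprema of valuations are bounded by the pointwise supremum, which is again a valuation. For
`y ∉ C` and `U = X ∖ C` this set contains `δ_y` and misses every `δ_x` with `x ∈ C`.
-/

section ScottOpen

variable {α : Type*} [Preorder α]

lemma scottOpen_empty : ScottOpen (∅ : Set α) :=
  ⟨fun _ _ _ h => h, fun _ _ _ _ _ h => h.elim⟩

lemma ScottOpen.union {U V : Set α} (hU : ScottOpen U) (hV : ScottOpen V) :
    ScottOpen (U ∪ V) := by
  refine ⟨?_, ?_⟩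
  · rintro a b hab (h | h)
    exacts [Or.inl (hU.1 hab h), Or.inr (hV.1 hab h)]
  · rintro d hne hdir x hx (h | h)
    · obtain ⟨a, ha, haU⟩ := hU.2 d hne hdir x hx h
      exact ⟨a, ha, Or.inl haU⟩
    · obtain ⟨a, ha, haV⟩ := hV.2 d hne hdir x hx h
      exact ⟨a, ha, Or.inr haV⟩

lemma ScottOpen.inter {U V : Set α} (hU : ScottOpen U) (hV : ScottOpen V) :
    ScottOpen (U ∩ V) := by
  refine ⟨fun a b hab h => ⟨hU.1 hab h.1, hV.1 hab h.2⟩, ?_⟩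
  rintro d hne hdir x hx ⟨hxU, hxV⟩
  obtain ⟨a, ha, haU⟩ := hU.2 d hne hdir x hx hxU
  obtain ⟨b, hb, hbV⟩ := hV.2 d hne hdir x hx hxV
  obtain ⟨c, hc, hac, hbc⟩ := hdir a ha b hb
  exact ⟨c, hc, hU.1 hac haU, hV.1 hbc hbV⟩

lemma scottOpen_sUnion {D : Set (Set α)} (hD : ∀ U ∈ D, ScottOpen U) :
    ScottOpen (⋃₀ D) := by
  refine ⟨?_, ?_⟩
  · rintro a b hab ⟨U, hUD, haU⟩
    exact ⟨U, hUD, (hD U hUD).1 hab haU⟩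
  · rintro d hne hdir x hx ⟨U, hUD, hxU⟩
    obtain ⟨a, ha, haU⟩ := (hD U hUD).2 d hne hdir x hx hxU
    exact ⟨a, ha, U, hUD, haU⟩

end ScottOpen

namespace SVal

variable {α : Type*} [Preorder α] (d : Set (SVal α))

noncomputable def supV (U : Set α) : ℝ :=
  sSup ((fun ν : SVal α => ν.v U) '' d)

variable {d}

lemma bddAbove_image_v {U : Set α} (hU : ScottOpen U) :
    BddAbove ((fun ν : SVal α => ν.v U) '' d) :=
  ⟨1, by rintro _ ⟨ν, -, rfl⟩; exact ν.le_one U hU⟩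

lemma le_supV {U : Set α} (hU : ScottOpen U) {ν : SVal α} (hν : ν ∈ d) : ν.v U ≤ supV d U :=
  le_csSup (bddAbove_image_v hU) ⟨ν, hν, rfl⟩

lemma supV_le (hne : d.Nonempty) {U : Set α} {b : ℝ} (h : ∀ ν ∈ d, ν.v U ≤ b) :
    supV d U ≤ b :=
  csSup_le (hne.image _) (by rintro _ ⟨ν, hν, rfl⟩; exact h ν hν)

lemma supV_mono (hne : d.Nonempty) {U V : Set α} (hU : ScottOpen U) (hV : ScottOpen V)
    (hUV : U ⊆ V) : supV d U ≤ supV d V :=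
  supV_le hne fun ν hν => (ν.mono hU hV hUV).trans (le_supV hV hν)

lemma supV_add_supV (hne : d.Nonempty) (hdir : DirectedOn (· ≤ ·) d) {U V : Set α}
    (hU : ScottOpen U) (hV : ScottOpen V) :
    supV d U + supV d V = sSup ((fun ν : SVal α => ν.v U + ν.v V) '' d) := by
  rw [supV, supV, ← csSup_add (hne.image _) (bddAbove_image_v hU) (hne.image _)
    (bddAbove_image_v hV)]
  apply csSup_eq_csSup_of_forall_exists_le
  · rintro _ ⟨_, ⟨ν, hν, rfl⟩, _, ⟨μ, hμ, rfl⟩, rfl⟩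
    obtain ⟨ρ, hρ, hνρ, hμρ⟩ := hdir ν hν μ hμ
    exact ⟨_, ⟨ρ, hρ, rfl⟩, add_le_add (hνρ U hU) (hμρ V hV)⟩
  · rintro _ ⟨ν, hν, rfl⟩
    exact ⟨_, Set.add_mem_add ⟨ν, hν, rfl⟩ ⟨ν, hν, rfl⟩, le_rfl⟩

variable (d) in
noncomputable def pointwiseSup (hne : d.Nonempty) (hdir : DirectedOn (· ≤ ·) d) : SVal α where
  v := supV d
  nonneg U hU := hne.elim fun ν hν => (ν.nonneg U hU).trans (le_supV hU hν)
  le_one U hU := supV_le hne fun ν _ => ν.le_one U hU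
  strict := le_antisymm (supV_le hne fun ν _ => ν.strict.le)
    (hne.elim fun ν hν => ν.strict.ge.trans (le_supV scottOpen_empty hν))
  mono _ _ hU hV hUV := supV_mono hne hU hV hUV
  cont D hD hDne hDdir := by
    have hUD := scottOpen_sUnion hD
    have hbdd : BddAbove (supV d '' D) :=
      ⟨1, by rintro _ ⟨U, hU, rfl⟩; exact supV_le hne fun ν _ => ν.le_one U (hD U hU)⟩
    refine le_antisymm (supV_le hne fun ν hν => ?_) (csSup_le (hDne.image _) ?_)
    · rw [ν.cont D hD hDne hDdir]
      refine csSup_le (hDne.image _) ?_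
      rintro _ ⟨U, hU, rfl⟩
      exact (le_supV (hD U hU) hν).trans (le_csSup hbdd ⟨U, hU, rfl⟩)
    · rintro _ ⟨U, hU, rfl⟩
      exact supV_mono hne (hD U hU) hUD (Set.subset_sUnion_of_mem hU)
  modular U V hU hV := by
    rw [supV_add_supV hne hdir hU hV, supV_add_supV hne hdir (hU.union hV) (hU.inter hV)]
    exact congrArg sSup (Set.image_congr fun ν _ => ν.modular U V hU hV)

lemma le_pointwiseSup (hne : d.Nonempty) (hdir : DirectedOn (· ≤ ·) d) {ν : SVal α}
    (hν : ν ∈ d) : ν ≤ pointwiseSup d hne hdir :=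
  fun _ hU => le_supV hU hν

lemma scottOpen_setOf_v_pos {U : Set α} (hU : ScottOpen U) :
    ScottOpen {ν : SVal α | 0 < ν.v U} := by
  refine ⟨fun ν μ hνμ hν => hν.trans_le (hνμ U hU), ?_⟩
  intro d hne hdir σ hσ hσU
  have hσle : σ.v U ≤ supV d U := hσ.2 (fun _ => le_pointwiseSup hne hdir) U hU
  obtain ⟨_, ⟨ν, hν, rfl⟩, hνU⟩ := exists_lt_of_lt_csSup (hne.image _) (hσU.trans_le hσle)
  exact ⟨ν, hν, hνU⟩

end SVal

theorem dirac_mem_scott_closure_iff_general {X : Type*} [PartialOrder X]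
    (C : Set X) (hC : ScottOpen Cᶜ)
    (dirac : X → SVal X) (hdv : ∀ x : X, (dirac x).v = diracF x)
    (y : X) :
    (∀ T : Set (SVal X), ScottOpen Tᶜ → dirac '' C ⊆ T → dirac y ∈ T) ↔
      y ∈ C := by
  refine ⟨fun h => ?_, fun hy _ _ hCT => hCT ⟨y, hy, rfl⟩⟩
  by_contra hy
  have hopen : ScottOpen {ν : SVal X | 0 < ν.v Cᶜ}ᶜᶜ := by
    rw [compl_compl]
    exact SVal.scottOpen_setOf_v_pos hC
  have hCT : dirac '' C ⊆ {ν : SVal X | 0 < ν.v Cᶜ}ᶜ := by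
    rintro _ ⟨x, hx, rfl⟩
    simp [hdv, diracF, hx]
  exact h _ hopen hCT (by simp [hdv, diracF, hy])

/-- Let `X` be a dcpo, `C ⊆ X` Scott-closed, `W = {δ_x | x ∈ C}` and `W̄` the
Scott closure of `W` in the dcpo of subprobability valuations on `X` with the
stochastic order.  Then `δ_y ∈ W̄` iff `y ∈ C`.  (Membership in the Scott
closure is expressed as membership in every Scott-closed superset of `W`.) -/
theorem dirac_mem_scott_closure_iff {X : Type*} [PartialOrder X]
    (hX : IsDcpo X)
    (C : Set X) (hC : ScottOpen Cᶜ)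
    (dirac : X → SVal X) (hdv : ∀ x : X, (dirac x).v = diracF x)
    (y : X) :
    (∀ T : Set (SVal X), ScottOpen Tᶜ → dirac '' C ⊆ T → dirac y ∈ T) ↔
      y ∈ C :=
  dirac_mem_scott_closure_iff_general C hC dirac hdv y
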